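/- Let g : E → ℤ/4ℤ be an H-form on a finite-dimensional ℤ/2-vector space E with associated bilinear form C. Let a ∈ E with g(a) = 2, and let T ∈ O(E,g). Then rank(T ∘ T_a − Id) = rank(T − Id) + 1 or rank(T ∘ T_a − Id) = rank(T − Id) − 1; equivalently, writing F(S) = ker(S − Id) for the fixed subspace of a linear map S, codim F(T ∘ T_a) = codim F(T) ± 1. -/

import Mathlib

/-!
Since `g` is preserved, so is `C`, and then `im (T - 1)` is the `C`-orthogonal of the fixed
space `ker (T - 1)`. So either `a ∈ im (T - 1)`, or some fixed vector `x` has `C(x, a) = 1`, in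
which case `T ∘ T_a` moves `x + a` by `a`.

If `S x = x + a` for an isometry `S`, comparing `g x` with `g (x + a)` forces `C(x, a) = 1`, as
`g a = 2`. Hence when `a ∈ im (T - 1)` all fixed vectors of `T` lie in `a^⊥`, whereas `T ∘ T_a`
agrees with `T` on `a^⊥` and also fixes `x + a ∉ a^⊥`: its fixed space is one dimension larger.
In the other case apply this to `T ∘ T_a`, using `T_a ∘ T_a = 1`.
-/

/-- The transvection `T_a : x ↦ x + C(x,a)·a`, as an endomorphism. -/
def TmapEnd {E : Type*} [AddCommGroup E] [Module (ZMod 2) E]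
    (C : E →ₗ[ZMod 2] E →ₗ[ZMod 2] ZMod 2) (a : E) : Module.End (ZMod 2) E :=
  LinearMap.id + (C.flip a).smulRight a

open Module LinearMap

section LinearAlgebra

theorem LinearMap.mem_range_sub_one_iff {R M : Type*} [Ring R] [AddCommGroup M] [Module R M]
    {S : Module.End R M} {a : M} :
    a ∈ range (S - 1) ↔ ∃ x, S x = x + a := by
  simp only [mem_range, sub_apply, Module.End.one_apply, sub_eq_iff_eq_add']

theorem LinearMap.mem_ker_sub_one_iff {R M : Type*} [Ring R] [AddCommGroup M] [Module R M]
    {S : Module.End R M} {x : M} :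
    x ∈ ker (S - 1) ↔ S x = x := by
  rw [mem_ker, sub_apply, Module.End.one_apply, sub_eq_zero]

variable {K V : Type*} [Field K] [AddCommGroup V] [Module K V] [FiniteDimensional K V]

theorem Submodule.finrank_inf_ker_add_one {W : Submodule K V} {f : Dual K V} {x : V}
    (hxW : x ∈ W) (hfx : f x ≠ 0) : finrank K ↥(W ⊓ ker f) + 1 = finrank K W := by
  have hf : f.domRestrict W ≠ 0 := fun h ↦ hfx (by simpa using LinearMap.congr_fun h ⟨x, hxW⟩)
  rw [← Dual.finrank_ker_add_one_of_ne_zero hf, ker_domRestrict, ← map_comap_subtype,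
    finrank_map_subtype_eq]

namespace LinearMap.BilinForm

variable {B : LinearMap.BilinForm K V} {S : Module.End K V}

theorem range_sub_one_eq_orthogonal_ker (hB : B.Nondegenerate)
    (hS : ∀ x y, B (S x) (S y) = B x y) : range (S - 1) = B.orthogonal (ker (S - 1)) := by
  refine Submodule.eq_of_le_of_finrank_eq ?_ ?_
  · rintro _ ⟨x, rfl⟩ y hy
    rw [mem_ker_sub_one_iff] at hy
    rw [LinearMap.sub_apply, Module.End.one_apply, map_sub, ← hS y x, hy, sub_self]
  · have := LinearMap.finrank_range_add_finrank_ker (S - 1)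
    rw [finrank_orthogonal hB]
    omega

theorem exists_map_eq_self_apply_ne_zero (hB : B.Nondegenerate)
    (hS : ∀ x y, B (S x) (S y) = B x y) {a : V} (ha : a ∉ range (S - 1)) :
    ∃ y, S y = y ∧ B y a ≠ 0 := by
  rw [range_sub_one_eq_orthogonal_ker hB hS] at ha
  simpa [mem_orthogonal_iff, sub_eq_zero] using ha

end LinearMap.BilinForm

end LinearAlgebra

section TmapEnd

variable {E : Type*} [AddCommGroup E] [Module (ZMod 2) E]
  {C : E →ₗ[ZMod 2] E →ₗ[ZMod 2] ZMod 2} {a : E}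

theorem TmapEnd_apply (x : E) : TmapEnd C a x = x + C x a • a := by
  simp [TmapEnd]

theorem TmapEnd_apply_of_apply_eq_zero {x : E} (hx : C x a = 0) : TmapEnd C a x = x := by
  rw [TmapEnd_apply, hx, zero_smul, add_zero]

theorem TmapEnd_apply_add_self {x : E} (hx : C x a = 1) (ha : C a a = 0) :
    TmapEnd C a (x + a) = x := by
  rw [TmapEnd_apply, map_add, LinearMap.add_apply, hx, ha, add_zero, one_smul, add_assoc,
    ZModModule.add_self, add_zero]

theorem TmapEnd_mul_self (ha : C a a = 0) : TmapEnd C a * TmapEnd C a = 1 := by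
  ext x
  rw [Module.End.mul_apply, Module.End.one_apply, TmapEnd_apply, TmapEnd_apply x, map_add,
    LinearMap.add_apply, map_smul, LinearMap.smul_apply, ha, smul_zero, add_zero, add_assoc,
    ZModModule.add_self, add_zero]

end TmapEnd

namespace HForm

private theorem two_mul_val_injective :
    Function.Injective fun u : ZMod 2 ↦ (2 : ZMod 4) * (u.val : ZMod 4) := by
  decide

private theorem two_add_two_mul_val_eq_zero_iff (u : ZMod 2) :
    (2 : ZMod 4) + 2 * (u.val : ZMod 4) = 0 ↔ u = 1 := by
  revert u; decide

private theorem two_add_two_add_two_mul_val_eq_zero_iff (u : ZMod 2) :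
    (2 : ZMod 4) + 2 + 2 * (u.val : ZMod 4) = 0 ↔ u = 0 := by
  revert u; decide

private theorem eq_one_of_ne_zero (u : ZMod 2) (hu : u ≠ 0) : u = 1 := by
  revert u; decide

variable {E : Type*} [AddCommGroup E] [Module (ZMod 2) E]
  {C : E →ₗ[ZMod 2] E →ₗ[ZMod 2] ZMod 2} {g : E → ZMod 4}
  (hadd : ∀ x y : E, g (x + y) = g x + g y + 2 * ((C x y).val : ZMod 4))
include hadd

theorem apply_zero : g 0 = 0 := by
  have h := hadd 0 0
  simp only [add_zero, LinearMap.map_zero, ZMod.val_zero, Nat.cast_zero, mul_zero] at h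
  exact left_eq_add.mp h

theorem bilin_map_map {T : Module.End (ZMod 2) E} (hT : ∀ x, g (T x) = g x) (x y : E) :
    C (T x) (T y) = C x y := by
  apply two_mul_val_injective
  have h := hadd (T x) (T y)
  rw [← LinearMap.map_add, hT, hT, hT, hadd x y] at h
  exact (add_left_cancel h).symm

theorem bilin_eq_one_of_map_eq_add {S : Module.End (ZMod 2) E} (hS : ∀ x, g (S x) = g x)
    {z v : E} (hz : S z = z + v) (hv : g v = 2) : C z v = 1 := by
  have h := hS z
  rw [hz, hadd, hv, add_assoc, add_eq_left] at h
  exact (two_add_two_mul_val_eq_zero_iff _).mp h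

theorem bilin_self_eq_zero {a : E} (ha : g a = 2) : C a a = 0 := by
  have h := hadd a a
  rw [ZModModule.add_self, apply_zero hadd, ha, eq_comm] at h
  exact (two_add_two_add_two_mul_val_eq_zero_iff _).mp h

theorem apply_TmapEnd {a : E} (ha : g a = 2) (x : E) : g (TmapEnd C a x) = g x := by
  by_cases hx : C x a = 0
  · rw [TmapEnd_apply_of_apply_eq_zero hx]
  · have hx := eq_one_of_ne_zero _ hx
    rw [TmapEnd_apply, hx, one_smul, hadd, ha, add_assoc,
      (two_add_two_mul_val_eq_zero_iff _).mpr hx, add_zero]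

theorem bilin_eq_zero_of_map_eq_self {S : Module.End (ZMod 2) E} (hS : ∀ x, g (S x) = g x)
    {a x y : E} (ha : g a = 2) (hx : S x = x + a) (hy : S y = y) : C y a = 0 := by
  have hxy : S (x + y) = x + y + a := by rw [LinearMap.map_add, hx, hy]; abel
  have h := bilin_eq_one_of_map_eq_add hadd hS hxy ha
  rwa [LinearMap.map_add, LinearMap.add_apply, bilin_eq_one_of_map_eq_add hadd hS hx ha,
    add_eq_left] at h

theorem finrank_range_sub_one_eq_add_one [FiniteDimensional (ZMod 2) E]
    {S : Module.End (ZMod 2) E} (hS : ∀ x, g (S x) = g x) {a : E} (ha : g a = 2)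
    (haS : a ∈ range (S - 1)) :
    finrank (ZMod 2) (range (S - 1)) = finrank (ZMod 2) (range (S * TmapEnd C a - 1)) + 1 := by
  obtain ⟨x, hx⟩ := mem_range_sub_one_iff.mp haS
  have hxa : C x a = 1 := bilin_eq_one_of_map_eq_add hadd hS hx ha
  have haa : C a a = 0 := bilin_self_eq_zero hadd ha
  have hfix : x + a ∈ ker (S * TmapEnd C a - 1) := by
    rw [mem_ker_sub_one_iff, Module.End.mul_apply, TmapEnd_apply_add_self hxa haa, hx]
  have hxaa : C.flip a (x + a) ≠ 0 := by
    simp [hxa, haa]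
  -- `S * TmapEnd C a` agrees with `S` on `a^⊥`, which contains every fixed vector of `S`
  have hker : ker (S * TmapEnd C a - 1) ⊓ ker (C.flip a) = ker (S - 1) := by
    ext z
    rw [Submodule.mem_inf, mem_ker_sub_one_iff, mem_ker_sub_one_iff, mem_ker, flip_apply,
      Module.End.mul_apply]
    constructor
    · rintro ⟨hz, hza⟩
      rwa [TmapEnd_apply_of_apply_eq_zero hza] at hz
    · intro hz
      have hza := bilin_eq_zero_of_map_eq_self hadd hS ha hx hz
      exact ⟨by rwa [TmapEnd_apply_of_apply_eq_zero hza], hza⟩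
  have hdim := Submodule.finrank_inf_ker_add_one hfix hxaa
  rw [hker] at hdim
  have := finrank_range_add_finrank_ker (S - 1)
  have := finrank_range_add_finrank_ker (S * TmapEnd C a - 1)
  omega

end HForm

theorem rank_comp_Tmap_sub_id_general
    {E : Type*} [AddCommGroup E] [Module (ZMod 2) E] [FiniteDimensional (ZMod 2) E]
    (C : E →ₗ[ZMod 2] E →ₗ[ZMod 2] ZMod 2) (g : E → ZMod 4)
    (hnd : ∀ x : E, (∀ y : E, C x y = 0) → x = 0)
    (hadd : ∀ x y : E, g (x + y) = g x + g y + 2 * ((C x y).val : ZMod 4))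
    (a : E) (ha : g a = 2)
    (T : Module.End (ZMod 2) E) (hT : ∀ x : E, g (T x) = g x) :
    Module.finrank (ZMod 2) (LinearMap.range (T * TmapEnd C a - 1)) =
      Module.finrank (ZMod 2) (LinearMap.range (T - 1)) + 1 ∨
    Module.finrank (ZMod 2) (LinearMap.range (T - 1)) =
      Module.finrank (ZMod 2) (LinearMap.range (T * TmapEnd C a - 1)) + 1 := by
  by_cases haT : a ∈ range (T - 1)
  · exact Or.inr (HForm.finrank_range_sub_one_eq_add_one hadd hT ha haT)
  left
  obtain ⟨x, hx, hxa⟩ := BilinForm.exists_map_eq_self_apply_ne_zero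
    (.ofSeparatingLeft hnd) (HForm.bilin_map_map hadd hT) haT
  have haa : C a a = 0 := HForm.bilin_self_eq_zero hadd ha
  have hxa : C x a = 1 := HForm.eq_one_of_ne_zero _ hxa
  have haT' : a ∈ range (T * TmapEnd C a - 1) :=
    mem_range_sub_one_iff.mpr ⟨x + a, by
      rw [Module.End.mul_apply, TmapEnd_apply_add_self hxa haa, hx, add_assoc,
        ZModModule.add_self, add_zero]⟩
  have hT' : ∀ y, g ((T * TmapEnd C a) y) = g y := fun y ↦ by
    rw [Module.End.mul_apply, hT, HForm.apply_TmapEnd hadd ha]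
  have := HForm.finrank_range_sub_one_eq_add_one hadd hT' ha haT'
  rwa [mul_assoc, TmapEnd_mul_self haa, mul_one] at this

/-- composing `T ∈ O(E,g)` with a transvection `T_a`, `g(a) = 2`,
changes `rank(T - Id)` by exactly one. -/
theorem rank_comp_Tmap_sub_id
    {E : Type*} [AddCommGroup E] [Module (ZMod 2) E] [FiniteDimensional (ZMod 2) E]
    (C : E →ₗ[ZMod 2] E →ₗ[ZMod 2] ZMod 2) (g : E → ZMod 4)
    (hsymm : ∀ x y : E, C x y = C y x)
    (hnd : ∀ x : E, (∀ y : E, C x y = 0) → x = 0)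
    (hadd : ∀ x y : E, g (x + y) = g x + g y + 2 * ((C x y).val : ZMod 4))
    (hodd : ∃ x : E, g x = 1 ∨ g x = 3)
    (a : E) (ha : g a = 2)
    (T : Module.End (ZMod 2) E) (hT : ∀ x : E, g (T x) = g x) :
    Module.finrank (ZMod 2) (LinearMap.range (T * TmapEnd C a - 1)) =
      Module.finrank (ZMod 2) (LinearMap.range (T - 1)) + 1 ∨
    Module.finrank (ZMod 2) (LinearMap.range (T - 1)) =
      Module.finrank (ZMod 2) (LinearMap.range (T * TmapEnd C a - 1)) + 1 :=
  rank_comp_Tmap_sub_id_general C g hnd hadd a ha T hT
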